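/- Let (G_α)_{α∈addr(t)} be a concrete evaluation of a tree t ∈ T_Σ into a graph G, where all operations are union or extension operations satisfying requirements (R1) and (R2), or the constant φ. Then for every address α ∈ addr(t), and every edge e of G whose source src(e) lies in the node set V_α of G_α, the edge e belongs to the edge set E_α of G_α. -/

import Mathlib

structure PGraph (ν Ld Lb : Type) where
  V : Set ν
  E : Set (ν × Lb × ν)
  lab : ν → Ld
  port : List ν

def PGraph.IsEmptyGraph {ν Ld Lb : Type} (G : PGraph ν Ld Lb) : Prop :=
  G.V = ∅ ∧ G.E = ∅ ∧ G.port = []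

def CloneWitness {ν Ld Lb : Type} (G : PGraph ν Ld Lb) (C : Set ν) (Cv : ν → Set ν)
    (G' : PGraph ν Ld Lb) : Prop :=
  (∀ v, v ∈ G.V → v ∉ C → Cv v = {v}) ∧
  (∀ u v, u ∈ G.V → v ∈ G.V → u ≠ v → Disjoint (Cv u) (Cv v)) ∧
  G'.V = (⋃ v ∈ G.V, Cv v) ∧
  G'.E = {e | ∃ u ℓ w, (u, ℓ, w) ∈ G.E ∧ e.1 ∈ Cv u ∧ e.2.1 = ℓ ∧ e.2.2 ∈ Cv w} ∧
  (∀ v, v ∈ G.V → ∀ v' ∈ Cv v, G'.lab v' = G.lab v) ∧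
  G'.port = G.port

def Clone {ν Ld Lb : Type} (G : PGraph ν Ld Lb) (C : Set ν) : Set (PGraph ν Ld Lb) :=
  {G' | ∃ Cv, CloneWitness G C Cv G'}

structure ExpOp (ν Ld Lb : Type) where
  V : Set ν
  E : Set (ν × Lb × ν)
  lab : ν → Ld
  port : List ν
  dock : List ν
  C : Set ν
  E_sub : ∀ e ∈ E, e.1 ∈ V ∧ e.2.2 ∈ V
  port_nodup : port.Nodup
  dock_nodup : dock.Nodup
  port_sub : ∀ v ∈ port, v ∈ V
  dock_sub : ∀ v ∈ dock, v ∈ V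
  C_sub : C ⊆ V \ ({v | v ∈ port} ∪ {v | v ∈ dock})

namespace ExpOp
variable {ν Ld Lb : Type}

def und (Φ : ExpOp ν Ld Lb) : PGraph ν Ld Lb := ⟨Φ.V, Φ.E, Φ.lab, Φ.port⟩

def NEW (Φ : ExpOp ν Ld Lb) : Set ν := {v | v ∈ Φ.port} \ {v | v ∈ Φ.dock}

def CONT (Φ : ExpOp ν Ld Lb) : Set ν := Φ.V \ ({v | v ∈ Φ.port} ∪ {v | v ∈ Φ.dock})

/-- (R1): every edge source lies in NEW. -/
def R1 (Φ : ExpOp ν Ld Lb) : Prop := ∀ e ∈ Φ.E, e.1 ∈ Φ.NEW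

/-- (R2): every dock node that is not a port is the target of some edge. -/
def R2 (Φ : ExpOp ν Ld Lb) : Prop := ∀ v ∈ Φ.dock, v ∉ Φ.port → ∃ e ∈ Φ.E, e.2.2 = v

/-- (R3): no isolated context nodes. -/
def R3 (Φ : ExpOp ν Ld Lb) : Prop := ∀ v ∈ Φ.V, v ∉ Φ.port → ∃ e ∈ Φ.E, e.2.2 = v

end ExpOp

def Apply {ν Ld Lb : Type} (Φ : ExpOp ν Ld Lb) (G H : PGraph ν Ld Lb) : Prop :=
  G.port.length = Φ.dock.length ∧
  ∃ (Cv : ν → Set ν) (G'' : PGraph ν Ld Lb) (μ : ν → ν),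
    CloneWitness Φ.und Φ.C Cv G'' ∧
    Set.InjOn μ G''.V ∧
    (∀ v ∈ Φ.NEW, μ v ∉ G.V) ∧
    Φ.dock.map μ = G.port ∧
    (∀ v ∈ Φ.CONT, ∀ v' ∈ Cv v, μ v' ∈ G.V ∧ μ v' ∉ {x | x ∈ G.port} ∧
      G.lab (μ v') = Φ.lab v) ∧
    H.V = G.V ∪ μ '' G''.V ∧
    H.E = G.E ∪ {e | ∃ e' ∈ G''.E, e = (μ e'.1, e'.2.1, μ e'.2.2)} ∧
    (∀ v ∈ G.V, H.lab v = G.lab v) ∧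
    (∀ v' ∈ G''.V, μ v' ∉ G.V → H.lab (μ v') = G''.lab v') ∧
    H.port = G''.port.map μ

def UnionOf {ν Ld Lb : Type} (G₁ G₂ H : PGraph ν Ld Lb) : Prop :=
  Disjoint G₁.V G₂.V ∧
  H.V = G₁.V ∪ G₂.V ∧
  H.E = G₁.E ∪ G₂.E ∧
  (∀ v ∈ G₁.V, H.lab v = G₁.lab v) ∧
  (∀ v ∈ G₂.V, H.lab v = G₂.lab v) ∧
  H.port = G₁.port ++ G₂.port

def Subgraph {ν Ld Lb : Type} (G' G : PGraph ν Ld Lb) : Prop :=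
  G'.V ⊆ G.V ∧ G'.E ⊆ G.E ∧ (∀ v ∈ G'.V, G'.lab v = G.lab v)

def PGraph.step {ν Ld Lb : Type} (G : PGraph ν Ld Lb) (u v : ν) : Prop :=
  ∃ ℓ, (u, ℓ, v) ∈ G.E

/-- Nodes reachable in `G` by directed paths from the nodes occurring in `p`. -/
def PGraph.reachSet {ν Ld Lb : Type} (G : PGraph ν Ld Lb) (p : List ν) : Set ν :=
  {v | ∃ u ∈ p, Relation.ReflTransGen G.step u v}

/-- `G↓p`: the subgraph of `G` induced by the nodes reachable from `p`, with port sequence `p`. -/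
def PGraph.restrictReach {ν Ld Lb : Type} (G : PGraph ν Ld Lb) (p : List ν) : PGraph ν Ld Lb :=
  ⟨G.reachSet p, {e | e ∈ G.E ∧ e.1 ∈ G.reachSet p ∧ e.2.2 ∈ G.reachSet p}, G.lab, p⟩

inductive OpTree (ν Ld Lb : Type) : Type where
  | phi : OpTree ν Ld Lb
  | ext : ExpOp ν Ld Lb → OpTree ν Ld Lb → OpTree ν Ld Lb
  | union : OpTree ν Ld Lb → OpTree ν Ld Lb → OpTree ν Ld Lb

namespace OpTree
variable {ν Ld Lb : Type}

def subtree : OpTree ν Ld Lb → List ℕ → Option (OpTree ν Ld Lb)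
  | t, [] => some t
  | .ext _ t, 1 :: α => t.subtree α
  | .union t₁ _, 1 :: α => t₁.subtree α
  | .union _ t₂, 2 :: α => t₂.subtree α
  | _, _ => none

def Addr (t : OpTree ν Ld Lb) (α : List ℕ) : Prop := (t.subtree α).isSome

def ops : OpTree ν Ld Lb → Set (ExpOp ν Ld Lb)
  | .phi => ∅
  | .ext Φ t => insert Φ t.ops
  | .union t₁ t₂ => t₁.ops ∪ t₂.ops

end OpTree

/-- A concrete evaluation of the tree `t` into the graph `G`: a family of subgraphs of `G`
(indexed by Gorn addresses, with no renaming of nodes) with `ev [] = G`, respecting the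
operations labelling `t`. -/
def ConcreteEval {ν Ld Lb : Type} (t : OpTree ν Ld Lb) (G : PGraph ν Ld Lb)
    (ev : List ℕ → PGraph ν Ld Lb) : Prop :=
  ev [] = G ∧
  ∀ α, t.Addr α →
    Subgraph (ev α) G ∧
    (t.subtree α = some .phi → (ev α).IsEmptyGraph) ∧
    (∀ Φ t', t.subtree α = some (.ext Φ t') → Apply Φ (ev (α ++ [1])) (ev α)) ∧
    (∀ t₁ t₂, t.subtree α = some (.union t₁ t₂) →
      UnionOf (ev (α ++ [1])) (ev (α ++ [2])) (ev α))

/-!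
Call a subgraph `G'` of `H` *out-closed* if every edge of `H` leaving a node of `G'` is an edge
of `G'`. Out-closedness is transitive, so it suffices to check it along each parent–child step of
the evaluation. For an extension, (R1) says that every new edge leaves a node of `NEW_Φ`, and
those nodes are fresh, i.e. not in the child graph. For a union, an edge of the other operand
leaves a node of that operand (by induction over `t`, every edge of an evaluated graph starts at
one of its nodes), and the operands are disjoint.
-/

namespace OpTree

variable {ν Ld Lb : Type}

theorem subtree_append (t : OpTree ν Ld Lb) (α β : List ℕ) :
    t.subtree (α ++ β) = (t.subtree α).bind (·.subtree β) := by
  induction α generalizing t with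
  | nil => simp [subtree]
  | cons a α ih =>
    cases t with
    | phi => rcases a with _ | _ | a <;> simp [subtree]
    | ext Φ t' => rcases a with _ | _ | a <;> simp [subtree, ih]
    | union t₁ t₂ => rcases a with _ | _ | _ | a <;> simp [subtree, ih]

theorem ops_subset_of_subtree_eq_some {t s : OpTree ν Ld Lb} {α : List ℕ}
    (h : t.subtree α = some s) : s.ops ⊆ t.ops := by
  induction α generalizing t with
  | nil => simp only [subtree, Option.some.injEq] at h; exact h ▸ subset_rfl
  | cons a α ih =>
    cases t with
    | phi => rcases a with _ | _ | a <;> simp [subtree] at h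
    | ext Φ t' =>
      rcases a with _ | _ | a <;> simp [subtree] at h
      exact (ih h).trans (Set.subset_insert _ _)
    | union t₁ t₂ =>
      rcases a with _ | _ | _ | a <;> simp [subtree] at h
      · exact (ih h).trans Set.subset_union_left
      · exact (ih h).trans Set.subset_union_right

theorem addr_of_subtree_eq_some {t s : OpTree ν Ld Lb} {α : List ℕ}
    (h : t.subtree α = some s) : t.Addr α := by
  simp [Addr, h]

theorem exists_subtree_of_addr_append {t : OpTree ν Ld Lb} {α β : List ℕ}
    (h : t.Addr (α ++ β)) : ∃ s, t.subtree α = some s ∧ (s.subtree β).isSome := by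
  rw [Addr, subtree_append] at h
  cases hα : t.subtree α with
  | none => simp [hα] at h
  | some s => exact ⟨s, rfl, by simpa [hα] using h⟩

end OpTree

namespace PGraph

variable {ν Ld Lb : Type}

def SrcClosed (G : PGraph ν Ld Lb) : Prop := ∀ e ∈ G.E, e.1 ∈ G.V

def OutClosedIn (G' G : PGraph ν Ld Lb) : Prop :=
  G'.V ⊆ G.V ∧ ∀ e ∈ G.E, e.1 ∈ G'.V → e ∈ G'.E

theorem OutClosedIn.refl (G : PGraph ν Ld Lb) : G.OutClosedIn G :=
  ⟨subset_rfl, fun _ he _ => he⟩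

theorem OutClosedIn.trans {G'' G' G : PGraph ν Ld Lb} (h₁ : G''.OutClosedIn G')
    (h₂ : G'.OutClosedIn G) : G''.OutClosedIn G :=
  ⟨h₁.1.trans h₂.1, fun e he hsrc => h₁.2 e (h₂.2 e he (h₁.1 hsrc)) hsrc⟩

theorem IsEmptyGraph.srcClosed {G : PGraph ν Ld Lb} (h : G.IsEmptyGraph) : G.SrcClosed := by
  simp [SrcClosed, h.2.1]

end PGraph

open PGraph

section Operations

variable {ν Ld Lb : Type}

theorem CloneWitness.src_mem {G G' : PGraph ν Ld Lb} {C : Set ν} {Cv : ν → Set ν}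
    (hCW : CloneWitness G C Cv G') {e : ν × Lb × ν} (he : e ∈ G'.E) :
    ∃ u ℓ w, (u, ℓ, w) ∈ G.E ∧ e.1 ∈ Cv u := by
  rw [hCW.2.2.2.1] at he
  obtain ⟨u, ℓ, w, huw, h1, -⟩ := he
  exact ⟨u, ℓ, w, huw, h1⟩

theorem Apply.srcClosed {Φ : ExpOp ν Ld Lb} {G H : PGraph ν Ld Lb} (happ : Apply Φ G H)
    (hG : G.SrcClosed) : H.SrcClosed := by
  obtain ⟨-, Cv, G'', μ, hCW, -, -, -, -, hV, hE, -⟩ := happ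
  intro e he
  rw [hE] at he
  rw [hV]
  rcases he with he | ⟨e', he', rfl⟩
  · exact Or.inl (hG e he)
  · obtain ⟨u, ℓ, w, huw, h1⟩ := hCW.src_mem he'
    refine Or.inr ⟨e'.1, ?_, rfl⟩
    rw [hCW.2.2.1]
    exact Set.mem_biUnion (Φ.E_sub _ huw).1 h1

theorem Apply.outClosedIn {Φ : ExpOp ν Ld Lb} {G H : PGraph ν Ld Lb} (happ : Apply Φ G H)
    (hR1 : Φ.R1) : G.OutClosedIn H := by
  obtain ⟨-, Cv, G'', μ, hCW, -, hnew, -, -, hV, hE, -⟩ := happ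
  refine ⟨hV ▸ Set.subset_union_left, fun e he hsrc => ?_⟩
  rw [hE] at he
  rcases he with he | ⟨e', he', rfl⟩
  · exact he
  · exfalso
    obtain ⟨u, ℓ, w, huw, h1⟩ := hCW.src_mem he'
    have hu : u ∈ Φ.NEW := hR1 _ huw
    -- `C_Φ` avoids the ports, so the new node `u` is not cloned.
    have huC : u ∉ Φ.C := fun hc => (Φ.C_sub hc).2 (Or.inl hu.1)
    rw [hCW.1 u (Φ.E_sub _ huw).1 huC, Set.mem_singleton_iff] at h1
    exact hnew u hu (h1 ▸ hsrc)

theorem UnionOf.srcClosed {G₁ G₂ H : PGraph ν Ld Lb} (hU : UnionOf G₁ G₂ H)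
    (h₁ : G₁.SrcClosed) (h₂ : G₂.SrcClosed) : H.SrcClosed := by
  obtain ⟨-, hV, hE, -⟩ := hU
  intro e he
  rw [hE] at he
  rw [hV]
  exact he.imp (h₁ e) (h₂ e)

theorem UnionOf.outClosedIn_left {G₁ G₂ H : PGraph ν Ld Lb} (hU : UnionOf G₁ G₂ H)
    (h₂ : G₂.SrcClosed) : G₁.OutClosedIn H := by
  obtain ⟨hdisj, hV, hE, -⟩ := hU
  refine ⟨hV ▸ Set.subset_union_left, fun e he hsrc => ?_⟩
  rw [hE] at he
  exact he.resolve_right fun he₂ => Set.disjoint_left.mp hdisj hsrc (h₂ e he₂)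

theorem UnionOf.outClosedIn_right {G₁ G₂ H : PGraph ν Ld Lb} (hU : UnionOf G₁ G₂ H)
    (h₁ : G₁.SrcClosed) : G₂.OutClosedIn H := by
  obtain ⟨hdisj, hV, hE, -⟩ := hU
  refine ⟨hV ▸ Set.subset_union_right, fun e he hsrc => ?_⟩
  rw [hE] at he
  exact he.resolve_left fun he₁ => Set.disjoint_left.mp hdisj (h₁ e he₁) hsrc

end Operations

namespace ConcreteEval

variable {ν Ld Lb : Type} {t : OpTree ν Ld Lb} {G : PGraph ν Ld Lb}
  {ev : List ℕ → PGraph ν Ld Lb} {α : List ℕ}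

theorem isEmptyGraph (h : ConcreteEval t G ev) (hα : t.subtree α = some .phi) :
    (ev α).IsEmptyGraph :=
  (h.2 α (OpTree.addr_of_subtree_eq_some hα)).2.1 hα

theorem apply (h : ConcreteEval t G ev) {Φ : ExpOp ν Ld Lb} {t' : OpTree ν Ld Lb}
    (hα : t.subtree α = some (.ext Φ t')) : Apply Φ (ev (α ++ [1])) (ev α) :=
  (h.2 α (OpTree.addr_of_subtree_eq_some hα)).2.2.1 Φ t' hα

theorem unionOf (h : ConcreteEval t G ev) {t₁ t₂ : OpTree ν Ld Lb}
    (hα : t.subtree α = some (.union t₁ t₂)) : UnionOf (ev (α ++ [1])) (ev (α ++ [2])) (ev α) :=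
  (h.2 α (OpTree.addr_of_subtree_eq_some hα)).2.2.2 t₁ t₂ hα

theorem srcClosed (h : ConcreteEval t G ev) (s : OpTree ν Ld Lb) :
    ∀ α, t.subtree α = some s → (ev α).SrcClosed := by
  induction s with
  | phi => exact fun α hα => (h.isEmptyGraph hα).srcClosed
  | ext Φ t' ih =>
    intro α hα
    exact (h.apply hα).srcClosed (ih _ (by simp [OpTree.subtree_append, hα, OpTree.subtree]))
  | union t₁ t₂ ih₁ ih₂ =>
    intro α hα
    exact (h.unionOf hα).srcClosed (ih₁ _ (by simp [OpTree.subtree_append, hα, OpTree.subtree]))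
      (ih₂ _ (by simp [OpTree.subtree_append, hα, OpTree.subtree]))

theorem outClosedIn_child (h : ConcreteEval t G ev) (hops : ∀ Φ ∈ t.ops, Φ.R1) {i : ℕ}
    (hi : t.Addr (α ++ [i])) : (ev (α ++ [i])).OutClosedIn (ev α) := by
  obtain ⟨s, hα, hs⟩ := OpTree.exists_subtree_of_addr_append hi
  cases s with
  | phi => simp [OpTree.subtree] at hs
  | ext Φ t' =>
    rcases i with _ | _ | i <;> simp [OpTree.subtree] at hs
    exact (h.apply hα).outClosedIn (hops Φ (OpTree.ops_subset_of_subtree_eq_some hα (Set.mem_insert _ _)))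
  | union t₁ t₂ =>
    have hsub₁ : t.subtree (α ++ [1]) = some t₁ := by
      simp [OpTree.subtree_append, hα, OpTree.subtree]
    have hsub₂ : t.subtree (α ++ [2]) = some t₂ := by
      simp [OpTree.subtree_append, hα, OpTree.subtree]
    rcases i with _ | _ | _ | i <;> simp [OpTree.subtree] at hs
    · exact (h.unionOf hα).outClosedIn_left (h.srcClosed t₂ _ hsub₂)
    · exact (h.unionOf hα).outClosedIn_right (h.srcClosed t₁ _ hsub₁)

end ConcreteEval

/-- Claim 1 of the Reachability Lemma: in a concrete evaluation of `t` into `G`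
(all operations being `φ`, unions, or extension operations satisfying (R1) and (R2)),
every edge of `G` whose source lies in `V_α` belongs to `E_α`. -/
theorem edges_from_evaluated_nodes {ν Ld Lb : Type} (t : OpTree ν Ld Lb)
    (G : PGraph ν Ld Lb) (ev : List ℕ → PGraph ν Ld Lb)
    (hops : ∀ Φ ∈ t.ops, Φ.R1 ∧ Φ.R2)
    (h : ConcreteEval t G ev) :
    ∀ α, t.Addr α → ∀ e ∈ G.E, e.1 ∈ (ev α).V → e ∈ (ev α).E := by
  suffices hclosed : ∀ α, t.Addr α → (ev α).OutClosedIn G from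
    fun α hα => (hclosed α hα).2
  intro α
  induction α using List.reverseRecOn with
  | nil => exact fun _ => h.1 ▸ OutClosedIn.refl _
  | append_singleton α i ih =>
    intro hi
    obtain ⟨s, hα, -⟩ := OpTree.exists_subtree_of_addr_append hi
    exact (h.outClosedIn_child (fun Φ hΦ => (hops Φ hΦ).1) hi).trans
      (ih (OpTree.addr_of_subtree_eq_some hα))
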